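/- arXiv:0901.1908 — 2 statements merged into one kernel-verified Lean document; each statement's English description precedes it below -/
import Mathlib

section
/- Let D be a nice probability measure on ℝ² and let Δ and Δ* be triangulations of ℝ². If every triangle t* ∈ Δ* has its interior intersecting the interiors of at most c triangles of Δ (with c ≥ 1), then H(Δ) ≤ H(Δ*) + log₂ c. -/
/-!
Refine `Δ` by `Δ*`: a triangle `t ∈ Δ` splits, up to null sets, into the pieces `t* ∩ t`, and
since `x ↦ x log(1/x)` is subadditive, `H(Δ)` is at most the entropy of the common refinement.
Grouping the refinement by `t* ∈ Δ*` instead, only the at most `c` pieces with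
`int t ∩ int t* ≠ ∅` carry mass (two convex sets with disjoint interiors meet in a Lebesgue-null
set), and by Jensen's inequality splitting a mass `D(t*)` into at most `c` parts raises the entropy
by at most `D(t*) log₂ c`.
-/

open MeasureTheory

/-- A closed halfplane in the plane (possibly degenerate when `(a,b) = (0,0)`). -/
def halfplane (a b c : ℝ) : Set (ℝ × ℝ) := {p | a * p.1 + b * p.2 ≤ c}

/-- A triangle: the intersection of at most 3 closed halfplanes
(taking a degenerate halfplane equal to the whole plane covers "fewer than 3"). -/
def IsTriangle (t : Set (ℝ × ℝ)) : Prop :=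
  ∃ a b c : Fin 3 → ℝ, t = ⋂ i, halfplane (a i) (b i) (c i)

/-- A triangulation of the plane: a finite set of triangles with pairwise
disjoint interiors whose union is all of `ℝ²`. -/
structure IsTriangulation (Δ : Finset (Set (ℝ × ℝ))) : Prop where
  tri : ∀ t ∈ Δ, IsTriangle t
  disj : ∀ t ∈ Δ, ∀ s ∈ Δ, t ≠ s → interior t ∩ interior s = ∅
  cover : ⋃₀ (Δ : Set (Set (ℝ × ℝ))) = Set.univ

/-- The function `x ↦ x·log₂(1/x)`; note that in Lean `0 * logb 2 (1/0) = 0`,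
matching the convention `0·log₂(1/0) = 0`. -/
noncomputable def ent (x : ℝ) : ℝ := x * Real.logb 2 (1 / x)

/-- The entropy `H(S) = Σ_{s ∈ S} D(s)·log₂(1/D(s))` of a finite family of sets. -/
noncomputable def Hent (μ : Measure (ℝ × ℝ)) (S : Finset (Set (ℝ × ℝ))) : ℝ :=
  ∑ s ∈ S, ent (μ s).toReal

open Real Finset

section Entropy

variable {ι : Type*} {I : Finset ι} {x : ι → ℝ}

lemma Real.negMulLog_sum_le_sum_negMulLog (hx : ∀ i ∈ I, 0 ≤ x i) :
    negMulLog (∑ i ∈ I, x i) ≤ ∑ i ∈ I, negMulLog (x i) := by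
  calc negMulLog (∑ i ∈ I, x i) = ∑ i ∈ I, -x i * log (∑ j ∈ I, x j) := by
        rw [negMulLog, ← Finset.sum_mul, Finset.sum_neg_distrib]
    _ ≤ ∑ i ∈ I, negMulLog (x i) := Finset.sum_le_sum fun i hi => by
        rcases (hx i hi).eq_or_lt with h0 | hpos
        · simp [← h0]
        · have := log_le_log hpos (Finset.single_le_sum hx hi)
          rw [negMulLog]
          nlinarith

lemma Real.sum_negMulLog_le_negMulLog_sum_add_mul_log_card (hx : ∀ i ∈ I, 0 ≤ x i) :
    ∑ i ∈ I, negMulLog (x i) ≤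
      negMulLog (∑ i ∈ I, x i) + (∑ i ∈ I, x i) * log #I := by
  rcases I.eq_empty_or_nonempty with rfl | hI
  · simp
  have hn : (0 : ℝ) < #I := by exact_mod_cast hI.card_pos
  have hjensen := concaveOn_negMulLog.le_map_sum (t := I) (w := fun _ => (#I : ℝ)⁻¹) (p := x)
    (fun _ _ => by positivity) (by simp [hn.ne']) hx
  simp only [smul_eq_mul, ← Finset.mul_sum] at hjensen
  rw [mul_comm _ (∑ i ∈ I, x i), negMulLog_mul] at hjensen
  have hlog : negMulLog (#I : ℝ)⁻¹ = (#I : ℝ)⁻¹ * log #I := by simp [negMulLog, log_inv]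
  rw [hlog] at hjensen
  have := mul_le_mul_of_nonneg_left hjensen hn.le
  field_simp at this
  linarith

lemma ent_eq_negMulLog_div_log_two (x : ℝ) : ent x = negMulLog x / log 2 := by
  simp [ent, negMulLog, logb, log_inv]
  ring

lemma ent_sum_le_sum_ent (hx : ∀ i ∈ I, 0 ≤ x i) :
    ent (∑ i ∈ I, x i) ≤ ∑ i ∈ I, ent (x i) := by
  simp only [ent_eq_negMulLog_div_log_two, ← Finset.sum_div]
  exact div_le_div_of_nonneg_right (negMulLog_sum_le_sum_negMulLog hx) (log_pos one_lt_two).le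

lemma sum_ent_le_ent_sum_add_mul_logb_card (hx : ∀ i ∈ I, 0 ≤ x i) :
    ∑ i ∈ I, ent (x i) ≤ ent (∑ i ∈ I, x i) + (∑ i ∈ I, x i) * logb 2 #I := by
  simp only [ent_eq_negMulLog_div_log_two, ← Finset.sum_div, logb, ← mul_div_assoc, ← add_div]
  exact div_le_div_of_nonneg_right (sum_negMulLog_le_negMulLog_sum_add_mul_log_card hx)
    (log_pos one_lt_two).le

lemma sum_ent_le_of_card_support_le (hx : ∀ i ∈ I, 0 ≤ x i) {c : ℝ}
    (hc : (#{i ∈ I | x i ≠ 0} : ℝ) ≤ c) :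
    ∑ i ∈ I, ent (x i) ≤ ent (∑ i ∈ I, x i) + (∑ i ∈ I, x i) * logb 2 c := by
  classical
  set J := {i ∈ I | x i ≠ 0}
  have hxJ : ∑ i ∈ J, x i = ∑ i ∈ I, x i := Finset.sum_filter_ne_zero I
  have hentJ : ∑ i ∈ J, ent (x i) = ∑ i ∈ I, ent (x i) :=
    Finset.sum_filter_of_ne fun i _ h hx0 => h (by rw [hx0, ent, zero_mul])
  rw [← hxJ, ← hentJ]
  rcases J.eq_empty_or_nonempty with hJ | hJ
  · simp [hJ, ent]
  calc ∑ i ∈ J, ent (x i) ≤ ent (∑ i ∈ J, x i) + (∑ i ∈ J, x i) * logb 2 #J :=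
        sum_ent_le_ent_sum_add_mul_logb_card fun i hi => hx i (Finset.mem_of_mem_filter i hi)
    _ ≤ ent (∑ i ∈ J, x i) + (∑ i ∈ J, x i) * logb 2 c := by
        gcongr
        · exact Finset.sum_nonneg fun i hi => hx i (Finset.mem_of_mem_filter i hi)
        · exact one_lt_two

end Entropy

section ConvexNull

variable {E : Type*} [NormedAddCommGroup E] [NormedSpace ℝ E] [MeasurableSpace E] [BorelSpace E]
  [FiniteDimensional ℝ E] {ν : Measure E} [ν.IsAddHaarMeasure] {μ : Measure E} {s t : Set E}

lemma Convex.measure_eq_zero_of_interior_eq_empty (hμ : μ ≪ ν) (hs : Convex ℝ s)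
    (h : interior s = ∅) : μ s = 0 :=
  measure_mono_null (by rw [frontier, h, Set.sdiff_empty]; exact subset_closure)
    (hμ (hs.addHaar_frontier ν))

lemma Convex.measure_inter_eq_zero_of_interior_inter_eq_empty (hμ : μ ≪ ν) (hs : Convex ℝ s)
    (ht : Convex ℝ t) (h : interior s ∩ interior t = ∅) : μ (s ∩ t) = 0 :=
  (hs.inter ht).measure_eq_zero_of_interior_eq_empty hμ (by rw [interior_inter, h])

end ConvexNull

lemma convex_halfplane (a b c : ℝ) : Convex ℝ (halfplane a b c) :=
  convex_halfSpace_le ⟨fun p q => by simp only [Prod.fst_add, Prod.snd_add]; ring,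
    fun r p => by simp only [Prod.smul_fst, Prod.smul_snd, smul_eq_mul]; ring⟩ c

lemma isClosed_halfplane (a b c : ℝ) : IsClosed (halfplane a b c) :=
  isClosed_le (by fun_prop) continuous_const

lemma IsTriangle.convex {t : Set (ℝ × ℝ)} (ht : IsTriangle t) : Convex ℝ t := by
  obtain ⟨a, b, c, rfl⟩ := ht
  exact convex_iInter fun i => convex_halfplane _ _ _

lemma IsTriangle.isClosed {t : Set (ℝ × ℝ)} (ht : IsTriangle t) : IsClosed t := by
  obtain ⟨a, b, c, rfl⟩ := ht
  exact isClosed_iInter fun i => isClosed_halfplane _ _ _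

namespace IsTriangulation

variable {Δ : Finset (Set (ℝ × ℝ))} {μ : Measure (ℝ × ℝ)}

lemma sum_measureReal_inter [IsFiniteMeasure μ] (hΔ : IsTriangulation Δ) (hμ : μ ≪ volume)
    {A : Set (ℝ × ℝ)} (hA : MeasurableSet A) :
    ∑ t ∈ Δ, μ.real (t ∩ A) = μ.real A := by
  have hcover : ⋃ t ∈ Δ, t ∩ A = A := by
    rw [← Set.iUnion₂_inter, ← Finset.set_biUnion_coe, ← Set.sUnion_eq_biUnion, hΔ.cover,
      Set.univ_inter]
  rw [← measureReal_biUnion_finset₀ _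
    fun t ht => ((hΔ.tri t ht).isClosed.measurableSet.inter hA).nullMeasurableSet, hcover]
  intro t ht s hs hts
  exact measure_mono_null (Set.inter_subset_inter Set.inter_subset_left Set.inter_subset_left)
    ((hΔ.tri t ht).convex.measure_inter_eq_zero_of_interior_inter_eq_empty hμ
      (hΔ.tri s hs).convex (hΔ.disj t ht s hs hts))

lemma sum_ent_measureReal_inter_le [IsFiniteMeasure μ] (hΔ : IsTriangulation Δ)
    (hμ : μ ≪ volume) {s : Set (ℝ × ℝ)} (hs : Convex ℝ s) (hsm : MeasurableSet s) {c : ℝ}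
    (hc : (({t | t ∈ Δ ∧ (interior t ∩ interior s).Nonempty} : Set (Set (ℝ × ℝ))).ncard : ℝ)
      ≤ c) :
    ∑ t ∈ Δ, ent (μ.real (s ∩ t)) ≤ ent (μ.real s) + μ.real s * logb 2 c := by
  classical
  have hsupport : (({t ∈ Δ | μ.real (s ∩ t) ≠ 0} : Finset _) : Set (Set (ℝ × ℝ))) ⊆
      {t | t ∈ Δ ∧ (interior t ∩ interior s).Nonempty} := by
    intro t ht
    simp only [Finset.coe_filter, Set.mem_ofPred_eq] at ht ⊢
    refine ⟨ht.1, Set.nonempty_iff_ne_empty.2 fun h => ht.2 ?_⟩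
    rw [measureReal_def, hs.measure_inter_eq_zero_of_interior_inter_eq_empty hμ
      (hΔ.tri t ht.1).convex (by rw [Set.inter_comm, h]), ENNReal.toReal_zero]
  have hcard : (#{t ∈ Δ | μ.real (s ∩ t) ≠ 0} : ℝ) ≤ c := by
    have := Set.ncard_le_ncard hsupport (Δ.finite_toSet.subset fun t ht => ht.1)
    rw [Set.ncard_coe_finset] at this
    exact le_trans (by exact_mod_cast this) hc
  have hsum : ∑ t ∈ Δ, μ.real (s ∩ t) = μ.real s := by
    simpa only [Set.inter_comm] using hΔ.sum_measureReal_inter hμ hsm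
  simpa only [hsum] using sum_ent_le_of_card_support_le (fun _ _ => measureReal_nonneg) hcard

end IsTriangulation

theorem entropy_lower_bound_simple_general
    (μ : Measure (ℝ × ℝ)) [IsProbabilityMeasure μ]
    (hnice : μ ≪ volume)
    (Δ Δstar : Finset (Set (ℝ × ℝ)))
    (hΔ : IsTriangulation Δ) (hΔstar : IsTriangulation Δstar)
    (c : ℝ)
    (hcount : ∀ tstar ∈ Δstar,
      (({t | t ∈ Δ ∧ (interior t ∩ interior tstar).Nonempty} :
          Set (Set (ℝ × ℝ))).ncard : ℝ) ≤ c) :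
    Hent μ Δ ≤ Hent μ Δstar + Real.logb 2 c := by
  have hmass : ∑ s ∈ Δstar, μ.real s = 1 := by
    simpa using hΔstar.sum_measureReal_inter hnice MeasurableSet.univ
  calc Hent μ Δ = ∑ t ∈ Δ, ent (∑ s ∈ Δstar, μ.real (s ∩ t)) :=
        Finset.sum_congr rfl fun t ht => by
          rw [hΔstar.sum_measureReal_inter hnice (hΔ.tri t ht).isClosed.measurableSet]; rfl
    _ ≤ ∑ t ∈ Δ, ∑ s ∈ Δstar, ent (μ.real (s ∩ t)) :=
        Finset.sum_le_sum fun t _ => ent_sum_le_sum_ent fun _ _ => measureReal_nonneg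
    _ = ∑ s ∈ Δstar, ∑ t ∈ Δ, ent (μ.real (s ∩ t)) := Finset.sum_comm
    _ ≤ ∑ s ∈ Δstar, (ent (μ.real s) + μ.real s * logb 2 c) :=
        Finset.sum_le_sum fun s hs => hΔ.sum_ent_measureReal_inter_le hnice
          (hΔstar.tri s hs).convex (hΔstar.tri s hs).isClosed.measurableSet (hcount s hs)
    _ = Hent μ Δstar + logb 2 c := by
        rw [Finset.sum_add_distrib, ← Finset.sum_mul, hmass, one_mul]
        rfl

theorem entropy_lower_bound_simple
    (μ : Measure (ℝ × ℝ)) [IsProbabilityMeasure μ]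
    (hnice : μ ≪ volume)
    (Δ Δstar : Finset (Set (ℝ × ℝ)))
    (hΔ : IsTriangulation Δ) (hΔstar : IsTriangulation Δstar)
    (c : ℝ) (hc : 1 ≤ c)
    (hcount : ∀ tstar ∈ Δstar,
      (({t | t ∈ Δ ∧ (interior t ∩ interior tstar).Nonempty} :
          Set (Set (ℝ × ℝ))).ncard : ℝ) ≤ c) :
    Hent μ Δ ≤ Hent μ Δstar + Real.logb 2 c :=
  entropy_lower_bound_simple_general μ hnice Δ Δstar hΔ hΔstar c hcount
end

section
/- There exists a universal constant C > 0 such that for every probability distribution p = (p_t)_{t∈T} on a countable set T with finite Shannon entropy H, and every α with 0 < α < 1, the entropy of the dyadic-level coarsening satisfies Σ_{i≥1} q_i·log₂(1/q_i) ≤ (1−α)·H + C·(1 + 1/(1−α)²), with the convention 0·log₂(1/0) = 0. -/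
/-- The total mass of the `i`-th dyadic level set
`G_i = {t : 2^{-i} < p_t ≤ 2^{-(i-1)}}` (for `i ≥ 1`). -/
noncomputable def dyadicMass {T : Type} (p : T → ℝ) (i : ℕ) : ℝ :=
  ∑' t : {t : T // (2 : ℝ) ^ (-(i : ℤ)) < p t ∧ p t ≤ (2 : ℝ) ^ (-(i : ℤ) + 1)}, p t

/-!
A point of `G_{n+1}` has `log₂ (1 / p_t) ≥ n`, and the level sets are fibres of the map
`t ↦ ⌊log₂ (1 / p_t)⌋`, so `∑ n · q_{n+1} ≤ H`. The elementary bound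
`q log₂ (1 / q) ≤ a q + 2 · 2^(-a)` with `a = (1 - α) n` then gives
`∑ ent (q_{n+1}) ≤ (1 - α) H + 2 ∑ 2^(-(1 - α) n)`, and this geometric series is at most
`2 / (1 - α)` because `2^(-β) ≤ 1 - β / 2` for `0 ≤ β ≤ 1` (Bernoulli).
-/

open Real

lemma logb_one_div_nonneg {x : ℝ} (h0 : 0 ≤ x) (h1 : x ≤ 1) : 0 ≤ logb 2 (1 / x) := by
  rw [one_div, logb_inv]
  exact neg_nonneg.2 (logb_nonpos one_lt_two h0 h1)

lemma ent_nonneg {x : ℝ} (h0 : 0 ≤ x) (h1 : x ≤ 1) : 0 ≤ ent x :=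
  mul_nonneg h0 (logb_one_div_nonneg h0 h1)

/-- From `log y ≤ y - 1` at `y = 2^(-a) / q`, together with `1 / log 2 ≤ 2`. -/
lemma ent_le_mul_add_two_mul_rpow {q : ℝ} (hq : 0 ≤ q) (a : ℝ) :
    ent q ≤ a * q + 2 * 2 ^ (-a) := by
  have hr : 0 < (2 : ℝ) ^ (-a) := rpow_pos_of_pos two_pos _
  rcases hq.eq_or_lt with rfl | hq
  · simp [ent]; positivity
  have hlog2 : 1 / 2 < log 2 := by linarith [log_two_gt_d9]
  have hsplit : log (1 / q) = log (2 ^ (-a) / q) + a * log 2 := by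
    rw [log_div hr.ne' hq.ne', log_rpow two_pos, one_div, log_inv]; ring
  have hgibbs : q * log (2 ^ (-a) / q) ≤ 2 ^ (-a) - q := by
    have := mul_le_mul_of_nonneg_left (log_le_sub_one_of_pos (div_pos hr hq)) hq.le
    rwa [mul_sub, mul_div_cancel₀ _ hq.ne', mul_one] at this
  rw [ent, logb, ← mul_div_assoc, div_le_iff₀ (by linarith), hsplit]
  nlinarith

lemma one_sub_two_rpow_neg_ge {β : ℝ} (h0 : 0 ≤ β) (h1 : β ≤ 1) : β / 2 ≤ 1 - 2 ^ (-β) := by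
  have h := rpow_one_add_le_one_add_mul_self (s := -1 / 2) (by norm_num) h0 h1
  rw [rpow_neg zero_le_two, ← inv_rpow zero_le_two]
  norm_num at h ⊢
  linarith

lemma tsum_ent_le_mul_tsum_add {q : ℕ → ℝ} (h0 : ∀ n, 0 ≤ q n) (h1 : ∀ n, q n ≤ 1)
    (hs : Summable fun n : ℕ => n * q n) {β : ℝ} (hβ0 : 0 < β) (hβ1 : β ≤ 1) :
    ∑' n, ent (q n) ≤ β * ∑' n : ℕ, n * q n + 4 / β := by
  set r : ℝ := 2 ^ (-β)
  have hr0 : 0 ≤ r := (rpow_pos_of_pos two_pos _).le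
  have hr : β / 2 ≤ 1 - r := one_sub_two_rpow_neg_ge hβ0.le hβ1
  have hr1 : r < 1 := by linarith
  have hle : ∀ n : ℕ, ent (q n) ≤ β * (n * q n) + 2 * r ^ n := fun n => by
    have h := ent_le_mul_add_two_mul_rpow (h0 n) (β * n)
    rwa [← neg_mul, rpow_mul zero_le_two, rpow_natCast, mul_assoc] at h
  have hgeom := summable_geometric_of_lt_one hr0 hr1
  have hbound : Summable fun n : ℕ => β * (n * q n) + 2 * r ^ n :=
    (hs.mul_left β).add (hgeom.mul_left 2)
  calc ∑' n, ent (q n) ≤ ∑' n : ℕ, (β * (n * q n) + 2 * r ^ n) :=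
        (hbound.of_nonneg_of_le (fun n => ent_nonneg (h0 n) (h1 n)) hle).tsum_le_tsum hle hbound
    _ = β * ∑' n : ℕ, n * q n + 2 * (1 - r)⁻¹ := by
        rw [(hs.mul_left β).tsum_add (hgeom.mul_left 2), tsum_mul_left, tsum_mul_left,
          tsum_geometric_of_lt_one hr0 hr1]
    _ ≤ β * ∑' n : ℕ, n * q n + 4 / β := by
        gcongr
        rw [← div_eq_mul_inv, div_le_div_iff₀ (by linarith) hβ0]
        linarith

noncomputable def dyadicIndex (x : ℝ) : ℕ := ⌊logb 2 (1 / x)⌋₊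

lemma dyadicIndex_mul_le_ent {x : ℝ} (h0 : 0 ≤ x) (h1 : x ≤ 1) :
    (dyadicIndex x : ℝ) * x ≤ ent x := by
  rw [ent, mul_comm]
  exact mul_le_mul_of_nonneg_left (Nat.floor_le (logb_one_div_nonneg h0 h1)) h0

lemma dyadicIndex_eq_of_mem {x : ℝ} {n : ℕ} (hlo : (2 : ℝ) ^ (-((n + 1 : ℕ) : ℤ)) < x)
    (hhi : x ≤ (2 : ℝ) ^ (-((n + 1 : ℕ) : ℤ) + 1)) : dyadicIndex x = n := by
  have hx : 0 < x := lt_trans (zpow_pos two_pos _) hlo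
  rw [← rpow_intCast] at hlo hhi
  push_cast at hlo hhi
  rw [show -((n : ℝ) + 1) + 1 = -n by ring] at hhi
  have hx1 : x ≤ 1 := hhi.trans (rpow_le_one_of_one_le_of_nonpos one_le_two (by simp))
  rw [dyadicIndex, Nat.floor_eq_iff (logb_one_div_nonneg hx.le hx1), one_div, logb_inv,
    le_neg, neg_lt, logb_le_iff_le_rpow one_lt_two hx,
    lt_logb_iff_rpow_lt one_lt_two hx]
  exact ⟨hhi, hlo⟩

lemma dyadicMass_nonneg {T : Type} {p : T → ℝ} (hp0 : ∀ t, 0 ≤ p t) (i : ℕ) :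
    0 ≤ dyadicMass p i :=
  tsum_nonneg fun t => hp0 t

lemma dyadicMass_le_one {T : Type} {p : T → ℝ} (hp0 : ∀ t, 0 ≤ p t) (hsum : HasSum p 1)
    (i : ℕ) : dyadicMass p i ≤ 1 :=
  hsum.tsum_eq ▸ hsum.summable.tsum_subtype_le p _ hp0

lemma natCast_mul_dyadicMass_succ_le {T : Type} {p : T → ℝ} (hp0 : ∀ t, 0 ≤ p t)
    (hp1 : ∀ t, p t ≤ 1) (hps : Summable p) (hent : Summable fun t => ent (p t)) (n : ℕ) :
    n * dyadicMass p (n + 1) ≤ ∑' t : (dyadicIndex ∘ p) ⁻¹' {n}, ent (p t) := by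
  rw [dyadicMass, ← tsum_mul_left]
  refine Summable.tsum_le_tsum_of_inj (fun t => ⟨t.1, dyadicIndex_eq_of_mem t.2.1 t.2.2⟩)
    (fun a b h => Subtype.ext (congrArg Subtype.val h :)) (fun c _ => ent_nonneg (hp0 c) (hp1 c))
    (fun t => ?_) ((hps.subtype _).mul_left _) (hent.subtype _)
  have h := dyadicIndex_mul_le_ent (hp0 t) (hp1 t)
  rwa [dyadicIndex_eq_of_mem t.2.1 t.2.2] at h

lemma summable_natCast_mul_dyadicMass_succ {T : Type} {p : T → ℝ} (hp0 : ∀ t, 0 ≤ p t)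
    (hp1 : ∀ t, p t ≤ 1) (hps : Summable p) (hent : Summable fun t => ent (p t)) :
    Summable fun n : ℕ => n * dyadicMass p (n + 1) :=
  (hent.hasSum.tsum_fiberwise (dyadicIndex ∘ p)).summable.of_nonneg_of_le
    (fun n => mul_nonneg n.cast_nonneg (dyadicMass_nonneg hp0 _))
    (natCast_mul_dyadicMass_succ_le hp0 hp1 hps hent)

lemma tsum_natCast_mul_dyadicMass_succ_le {T : Type} {p : T → ℝ} (hp0 : ∀ t, 0 ≤ p t)
    (hp1 : ∀ t, p t ≤ 1) (hps : Summable p) (hent : Summable fun t => ent (p t)) :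
    ∑' n : ℕ, n * dyadicMass p (n + 1) ≤ ∑' t, ent (p t) :=
  hasSum_le (natCast_mul_dyadicMass_succ_le hp0 hp1 hps hent)
    (summable_natCast_mul_dyadicMass_succ hp0 hp1 hps hent).hasSum
    (hent.hasSum.tsum_fiberwise (dyadicIndex ∘ p))

/-- For every `0 < α < 1`, the entropy of the dyadic-level coarsening of a countable
distribution is at most `(1-α)·H + C·(1 + 1/(1-α)²)` for a universal constant `C`. -/
theorem dyadic_coarsening_entropy_alpha :
    ∃ C : ℝ, 0 < C ∧
      ∀ (T : Type) [Countable T] (p : T → ℝ),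
        (∀ t, 0 ≤ p t) → HasSum p 1 →
        Summable (fun t => ent (p t)) →
        ∀ α : ℝ, 0 < α → α < 1 →
        (∑' i : ℕ, ent (dyadicMass p (i + 1))) ≤
          (1 - α) * (∑' t, ent (p t)) + C * (1 + 1 / (1 - α) ^ 2) := by
  refine ⟨4, four_pos, fun T _ p hp0 hsum hent α hα0 hα1 => ?_⟩
  have hp1 : ∀ t, p t ≤ 1 := fun t => le_hasSum hsum t fun s _ => hp0 s
  have hβ : 0 < 1 - α := sub_pos.2 hα1
  calc ∑' n : ℕ, ent (dyadicMass p (n + 1))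
      ≤ (1 - α) * ∑' n : ℕ, n * dyadicMass p (n + 1) + 4 / (1 - α) :=
        tsum_ent_le_mul_tsum_add (fun n => dyadicMass_nonneg hp0 _)
          (fun n => dyadicMass_le_one hp0 hsum _)
          (summable_natCast_mul_dyadicMass_succ hp0 hp1 hsum.summable hent) hβ (by linarith)
    _ ≤ (1 - α) * ∑' t, ent (p t) + 4 * (1 + 1 / (1 - α) ^ 2) := by
        gcongr
        · exact tsum_natCast_mul_dyadicMass_succ_le hp0 hp1 hsum.summable hent
        · rw [div_eq_mul_one_div, ← one_div_pow]
          nlinarith [sq_nonneg (1 / (1 - α) - 1)]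
end
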